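/- Let X be a random vector in ℝⁿ distributed as the multivariate Gaussian with mean Fβ (for some β ∈ ℝᵏ) and covariance matrix Σ = σ₀²I_n + VDV'. Then for each j ∈ {1,…,l}, the variance of the BLUP natural estimator ((T̂X)ⱼ)² equals 2(σⱼ² − σ₀²(Ŵ⁻¹)ⱼⱼ)². -/

import Mathlib

/-!
Since `M_F F = 0`, the coefficient matrix `T̂ = Ŵ⁻¹V'M_F` annihilates the mean `Fβ`, so `(T̂X)ⱼ`
is a centred Gaussian with variance `q = (T̂ΣT̂')ⱼⱼ`. With `A = V'M_F V = Ŵ - σ₀²D⁻¹` and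
`M_F² = M_F`, `T̂ΣT̂' = Ŵ⁻¹(σ₀²A + ADA)Ŵ⁻¹ = Ŵ⁻¹(ADŴ)Ŵ⁻¹ = Ŵ⁻¹AD = D - σ₀²Ŵ⁻¹`, whose `j`-th
diagonal entry is `σⱼ² - σ₀²(Ŵ⁻¹)ⱼⱼ`. Finally `Var(Z²) = E Z⁴ - (E Z²)² = 3q² - q² = 2q²` for
`Z ~ N(0, q)`, the moments being the derivatives at `0` of the moment generating function
`exp (q t² / 2)`.
-/

open Matrix MeasureTheory ProbabilityTheory Real
open scoped NNReal

section GaussianMoments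

open Polynomial

noncomputable def expMulSqDerivPoly (a : ℝ) : ℕ → ℝ[X]
  | 0 => 1
  | n + 1 => derivative (expMulSqDerivPoly a n) + C (2 * a) * X * expMulSqDerivPoly a n

lemma iteratedDeriv_exp_mul_sq (a : ℝ) (n : ℕ) :
    iteratedDeriv n (fun t => rexp (a * t ^ 2)) =
      fun t => (expMulSqDerivPoly a n).eval t * rexp (a * t ^ 2) := by
  induction n with
  | zero => simp [expMulSqDerivPoly]
  | succ n ih =>
    rw [iteratedDeriv_succ, ih]
    ext t
    have hexp : HasDerivAt (fun t => rexp (a * t ^ 2)) (rexp (a * t ^ 2) * (a * (2 * t))) t := by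
      simpa using ((hasDerivAt_pow 2 t).const_mul a).exp
    rw [((Polynomial.hasDerivAt _ t).fun_mul hexp).deriv, expMulSqDerivPoly]
    simp only [eval_add, eval_mul, eval_C, eval_X]
    ring

lemma integral_pow_gaussianReal_zero (v : ℝ≥0) (n : ℕ) :
    ∫ x, x ^ n ∂gaussianReal 0 v = (expMulSqDerivPoly (v / 2) n).eval 0 := by
  have hmgf : mgf (fun x => x) (gaussianReal 0 v) = fun t => rexp (v / 2 * t ^ 2) := by
    ext t
    rw [mgf_fun_id_gaussianReal]
    ring_nf
  have h := iteratedDeriv_mgf_zero (X := fun x => x) (μ := gaussianReal 0 v) (by simp) n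
  rw [hmgf, iteratedDeriv_exp_mul_sq] at h
  simpa using h.symm

lemma integral_sq_gaussianReal_zero (v : ℝ≥0) : ∫ x, x ^ 2 ∂gaussianReal 0 v = v := by
  rw [integral_pow_gaussianReal_zero]
  simp only [expMulSqDerivPoly, derivative_one, derivative_mul, derivative_add, derivative_C,
    derivative_X, derivative_zero, eval_add, eval_mul, eval_C, eval_X, eval_zero, eval_one]
  ring

lemma integral_pow_four_gaussianReal_zero (v : ℝ≥0) :
    ∫ x, x ^ 4 ∂gaussianReal 0 v = 3 * (v : ℝ) ^ 2 := by
  rw [integral_pow_gaussianReal_zero]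
  simp only [expMulSqDerivPoly, derivative_one, derivative_mul, derivative_add, derivative_C,
    derivative_X, derivative_zero, eval_add, eval_mul, eval_C, eval_X, eval_zero, eval_one]
  ring

end GaussianMoments

lemma variance_fun_sq_gaussianReal_zero (v : ℝ≥0) :
    Var[fun x => x ^ 2; gaussianReal 0 v] = 2 * (v : ℝ) ^ 2 := by
  have hint : Integrable (fun x : ℝ => (x ^ 2) ^ 2) (gaussianReal 0 v) := by
    simpa [← pow_mul] using
      integrable_pow_of_mem_interior_integrableExpSet (X := fun x => x) (by simp) 4
  rw [variance_eq_sub ((memLp_two_iff_integrable_sq (by fun_prop)).mpr hint)]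
  simp only [Pi.pow_apply, ← pow_mul, integral_sq_gaussianReal_zero,
    integral_pow_four_gaussianReal_zero]
  ring

lemma variance_sq_of_map_eq_gaussianReal_zero {Ω : Type*} [MeasurableSpace Ω] {μ : Measure Ω}
    {Z : Ω → ℝ} (hZ : Measurable Z) {v : ℝ≥0} (hmap : μ.map Z = gaussianReal 0 v) :
    Var[fun ω => Z ω ^ 2; μ] = 2 * (v : ℝ) ^ 2 := by
  rw [MeasurePreserving.variance_fun_comp (f := fun x => x ^ 2) ⟨hZ, hmap⟩ (by fun_prop),
    variance_fun_sq_gaussianReal_zero]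

namespace Matrix

variable {m n l : Type*} [Fintype n]

lemma mulVec_injective_of_rank_eq_card {K : Type*} [Field K] {A : Matrix m n K}
    (h : A.rank = Fintype.card n) : Function.Injective A.mulVec :=
  mulVec_injective_iff.mpr <| linearIndependent_iff_card_eq_finrank_span.mpr <| by
    rw [Set.finrank, ← rank_eq_finrank_span_cols, h]

lemma mulVec_injective_of_fromCols [Fintype l] {R : Type*} [CommRing R] {A₁ : Matrix m n R}
    {A₂ : Matrix m l R} (h : Function.Injective (fromCols A₁ A₂).mulVec) :
    Function.Injective A₁.mulVec := by
  intro x y hxy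
  have hxy' := @h (Sum.elim x 0) (Sum.elim y 0) (by simp [hxy])
  funext i
  simpa using congr_fun hxy' (Sum.inl i)

lemma sum_mul_mul_eq_mul_mul_transpose_apply (T : Matrix m n ℝ) (S : Matrix n n ℝ) (j : m) :
    ∑ i, ∑ i', T j i * S i i' * T j i' = (T * S * Tᵀ) j j := by
  simp only [mul_apply, transpose_apply, Finset.sum_mul]
  exact Finset.sum_comm

variable [Fintype m]

lemma isUnit_det_transpose_mul_self [DecidableEq n] {A : Matrix m n ℝ}
    (hA : Function.Injective A.mulVec) : IsUnit (Aᵀ * A).det :=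
  (PosDef.conjTranspose_mul_self A hA).det_pos.ne'.isUnit

lemma posSemidef_smul_one_add_mul_mul_transpose [DecidableEq n] {s : ℝ} (hs : 0 ≤ s)
    {D : Matrix m m ℝ} (hD : D.PosSemidef) (V : Matrix n m ℝ) :
    (s • 1 + V * D * Vᵀ).PosSemidef := by
  simpa using (PosSemidef.one.smul hs).add (hD.mul_mul_conjTranspose_same V)

variable [DecidableEq m] [DecidableEq n]

noncomputable def residualMaker (A : Matrix m n ℝ) : Matrix m m ℝ :=
  1 - A * (Aᵀ * A)⁻¹ * Aᵀ

lemma transpose_residualMaker (A : Matrix m n ℝ) : (residualMaker A)ᵀ = residualMaker A := by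
  rw [residualMaker, transpose_sub, transpose_one, transpose_mul, transpose_mul,
    transpose_transpose, transpose_nonsing_inv, transpose_mul, transpose_transpose,
    Matrix.mul_assoc]

lemma residualMaker_mul_eq_zero {A : Matrix m n ℝ} (hA : IsUnit (Aᵀ * A).det) :
    residualMaker A * A = 0 := by
  rw [residualMaker, Matrix.sub_mul, Matrix.one_mul, Matrix.mul_assoc _ Aᵀ, Matrix.mul_assoc A,
    nonsing_inv_mul _ hA, Matrix.mul_one, sub_self]

lemma isIdempotentElem_residualMaker {A : Matrix m n ℝ} (hA : IsUnit (Aᵀ * A).det) :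
    IsIdempotentElem (residualMaker A) := by
  unfold IsIdempotentElem
  nth_rw 2 [residualMaker]
  rw [Matrix.mul_sub, Matrix.mul_one, ← Matrix.mul_assoc, ← Matrix.mul_assoc,
    residualMaker_mul_eq_zero hA, Matrix.zero_mul, Matrix.zero_mul, sub_zero]

end Matrix

section BLUP

variable {n l : Type*} [Fintype n] [Fintype l] [DecidableEq l]
  (V : Matrix n l ℝ) (M : Matrix n n ℝ) (D : Matrix l l ℝ) (s : ℝ)

noncomputable def blupWeight : Matrix l l ℝ := Vᵀ * M * V + s • D⁻¹

noncomputable def blupCoeff : Matrix l n ℝ := (blupWeight V M D s)⁻¹ * Vᵀ * M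

variable {V M D s}

lemma posDef_blupWeight (hM : Mᵀ = M) (hMM : IsIdempotentElem M) (hD : D.PosDef) (hs : 0 < s) :
    (blupWeight V M D s).PosDef := by
  have hA : Vᵀ * M * V = (M * V)ᴴ * (M * V) := by
    rw [conjTranspose_eq_transpose_of_trivial, transpose_mul, hM, Matrix.mul_assoc Vᵀ M (M * V),
      ← Matrix.mul_assoc M M, hMM.eq, Matrix.mul_assoc]
  rw [blupWeight, hA]
  exact PosDef.posSemidef_add (posSemidef_conjTranspose_mul_self _) (hD.inv.smul hs)

lemma blupCoeff_mul_mul_transpose [DecidableEq n] (hM : Mᵀ = M) (hMM : IsIdempotentElem M)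
    (hD : D.PosDef) (hs : 0 < s) :
    blupCoeff V M D s * (s • 1 + V * D * Vᵀ) * (blupCoeff V M D s)ᵀ =
      D - s • (blupWeight V M D s)⁻¹ := by
  have hW := posDef_blupWeight (V := V) hM hMM hD hs
  set W := blupWeight V M D s with hWdef
  set A := Vᵀ * M * V with hAdef
  have hWu : IsUnit W.det := hW.det_pos.ne'.isUnit
  have hDu : IsUnit D.det := hD.det_pos.ne'.isUnit
  have hWt : W⁻¹ᵀ = W⁻¹ := by
    rw [transpose_nonsing_inv, ← conjTranspose_eq_transpose_of_trivial, hW.isHermitian.eq]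
  have hAW : A = W - s • D⁻¹ := by rw [hWdef, blupWeight]; abel
  have hADW : s • A + A * D * A = A * D * W := by
    rw [hWdef, blupWeight, ← hAdef, Matrix.mul_add, Matrix.mul_smul, Matrix.mul_assoc A D D⁻¹,
      mul_nonsing_inv _ hDu, Matrix.mul_one, add_comm]
  calc blupCoeff V M D s * (s • 1 + V * D * Vᵀ) * (blupCoeff V M D s)ᵀ
      = W⁻¹ * (s • A + A * D * A) * W⁻¹ := by
        rw [blupCoeff, transpose_mul, transpose_mul, hM, hWt, transpose_transpose]
        simp only [hAdef, Matrix.mul_add, Matrix.add_mul, Matrix.mul_smul, Matrix.smul_mul,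
          Matrix.mul_one, Matrix.mul_assoc]
        rw [← Matrix.mul_assoc M M, hMM.eq]
    _ = W⁻¹ * A * D := by
        rw [hADW, Matrix.mul_assoc W⁻¹ (A * D * W), Matrix.mul_assoc (A * D),
          mul_nonsing_inv _ hWu, Matrix.mul_one, Matrix.mul_assoc W⁻¹ A D]
    _ = D - s • W⁻¹ := by
        rw [hAW, Matrix.mul_sub, nonsing_inv_mul _ hWu, Matrix.sub_mul, Matrix.one_mul,
          Matrix.mul_smul, Matrix.smul_mul, Matrix.mul_assoc, nonsing_inv_mul _ hDu,
          Matrix.mul_one]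

end BLUP

lemma variance_sq_mulVec_apply_of_gaussian {ι κ Ω : Type*} [Fintype ι] [Fintype κ]
    [MeasurableSpace Ω] {μ : Measure Ω} {X : Ω → ι → ℝ}
    (hX : ∀ i, Measurable fun ω => X ω i) {m : ι → ℝ} {S : Matrix ι ι ℝ} (hS : S.PosSemidef)
    (hgauss : ∀ t : ι → ℝ, μ.map (fun ω => ∑ i, t i * X ω i) =
      gaussianReal (∑ i, t i * m i) (Real.toNNReal (∑ i, ∑ i', t i * S i i' * t i')))
    (T : Matrix κ ι ℝ) (j : κ) (hm : (T *ᵥ m) j = 0) :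
    Var[fun ω => (T *ᵥ X ω) j ^ 2; μ] = 2 * ((T * S * Tᵀ) j j) ^ 2 := by
  have hmap : μ.map (fun ω => (T *ᵥ X ω) j) =
      gaussianReal 0 (Real.toNNReal ((T * S * Tᵀ) j j)) := by
    rw [← hm, ← sum_mul_mul_eq_mul_mul_transpose_apply]
    exact hgauss (T j)
  have hmeas : Measurable fun ω => (T *ᵥ X ω) j :=
    Finset.measurable_sum _ fun i _ => (hX i).const_mul _
  have hnonneg : 0 ≤ (T * S * Tᵀ) j j := by
    simpa using (hS.mul_mul_conjTranspose_same T).diag_nonneg (i := j)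
  rw [variance_sq_of_map_eq_gaussianReal_zero hmeas hmap, Real.coe_toNNReal _ hnonneg]

theorem stmt_8_general {n k l : ℕ}
    (F : Matrix (Fin n) (Fin k) ℝ) (V : Matrix (Fin n) (Fin l) ℝ)
    (hrank : (Matrix.fromCols F V).rank = k + l)
    (σ0 : ℝ) (hσ0 : 0 < σ0)
    (σ : Fin l → ℝ) (hσ : ∀ j, 0 < σ j)
    (D : Matrix (Fin l) (Fin l) ℝ) (hD : D = Matrix.diagonal σ)
    (Mf : Matrix (Fin n) (Fin n) ℝ) (hMf : Mf = 1 - F * (Fᵀ * F)⁻¹ * Fᵀ)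
    (What : Matrix (Fin l) (Fin l) ℝ) (hWhat : What = Vᵀ * Mf * V + σ0 • D⁻¹)
    (That : Matrix (Fin l) (Fin n) ℝ) (hThat : That = What⁻¹ * Vᵀ * Mf)
    (Sigma : Matrix (Fin n) (Fin n) ℝ)
    (hSigma : Sigma = σ0 • (1 : Matrix (Fin n) (Fin n) ℝ) + V * D * Vᵀ)
    (Ω : Type) [MeasurableSpace Ω] (μ : Measure Ω)
    (X : Ω → Fin n → ℝ) (hXmeas : ∀ i, Measurable fun ω => X ω i)
    (β : Fin k → ℝ)
    (hgauss : ∀ t : Fin n → ℝ,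
      μ.map (fun ω => ∑ i, t i * X ω i) =
        gaussianReal (∑ i, t i * F.mulVec β i)
          (Real.toNNReal (∑ i, ∑ i', t i * Sigma i i' * t i'))) :
    ∀ j : Fin l,
      variance (fun ω => (That.mulVec (X ω) j) ^ 2) μ
        = 2 * (σ j - σ0 * What⁻¹ j j) ^ 2 := by
  subst hD hMf hWhat hThat hSigma
  have hFtF : IsUnit (Fᵀ * F).det :=
    isUnit_det_transpose_mul_self <| mulVec_injective_of_fromCols (A₂ := V) <|
      mulVec_injective_of_rank_eq_card (by simpa using hrank)
  have hD : (diagonal σ).PosDef := PosDef.diagonal hσ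
  have hTF : blupCoeff V (residualMaker F) (diagonal σ) σ0 * F = 0 := by
    rw [blupCoeff, Matrix.mul_assoc, residualMaker_mul_eq_zero hFtF, Matrix.mul_zero]
  intro j
  rw [← residualMaker, ← blupWeight, ← blupCoeff, variance_sq_mulVec_apply_of_gaussian hXmeas
    (posSemidef_smul_one_add_mul_mul_transpose hσ0.le hD.posSemidef V) hgauss _ j
    (by rw [mulVec_mulVec, hTF, zero_mulVec, Pi.zero_apply]),
    blupCoeff_mul_mul_transpose (transpose_residualMaker F) (isIdempotentElem_residualMaker hFtF)
      hD hσ0]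
  simp [blupWeight]

/-- Variance of the BLUP natural estimator under Gaussianity:
if `X ~ N_n(Fβ, Σ)` with `Σ = σ₀²I_n + VDV'` (multivariate normality expressed
via one-dimensional marginals of all linear functionals), then
`Var[((T̂X)ⱼ)²] = 2(σⱼ² − σ₀²(Ŵ⁻¹)ⱼⱼ)²`. -/
theorem stmt_8 {n k l : ℕ} (hn : 0 < n) (hk : 0 < k) (hl : 0 < l)
    (hnkl : k + l < n)
    (F : Matrix (Fin n) (Fin k) ℝ) (V : Matrix (Fin n) (Fin l) ℝ)
    (hrank : (Matrix.fromCols F V).rank = k + l)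
    (σ0 : ℝ) (hσ0 : 0 < σ0)
    (σ : Fin l → ℝ) (hσ : ∀ j, 0 < σ j)
    (D : Matrix (Fin l) (Fin l) ℝ) (hD : D = Matrix.diagonal σ)
    (Mf : Matrix (Fin n) (Fin n) ℝ) (hMf : Mf = 1 - F * (Fᵀ * F)⁻¹ * Fᵀ)
    (What : Matrix (Fin l) (Fin l) ℝ) (hWhat : What = Vᵀ * Mf * V + σ0 • D⁻¹)
    (That : Matrix (Fin l) (Fin n) ℝ) (hThat : That = What⁻¹ * Vᵀ * Mf)
    (Sigma : Matrix (Fin n) (Fin n) ℝ)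
    (hSigma : Sigma = σ0 • (1 : Matrix (Fin n) (Fin n) ℝ) + V * D * Vᵀ)
    (Ω : Type) [MeasurableSpace Ω] (μ : Measure Ω) [IsProbabilityMeasure μ]
    (X : Ω → Fin n → ℝ) (hXmeas : ∀ i, Measurable fun ω => X ω i)
    (β : Fin k → ℝ)
    (hgauss : ∀ t : Fin n → ℝ,
      μ.map (fun ω => ∑ i, t i * X ω i) =
        gaussianReal (∑ i, t i * F.mulVec β i)
          (Real.toNNReal (∑ i, ∑ i', t i * Sigma i i' * t i'))) :
    ∀ j : Fin l,
      variance (fun ω => (That.mulVec (X ω) j) ^ 2) μ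
        = 2 * (σ j - σ0 * What⁻¹ j j) ^ 2 :=
  stmt_8_general F V hrank σ0 hσ0 σ hσ D hD Mf hMf What hWhat That hThat Sigma hSigma Ω μ X hXmeas β
    hgauss
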